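/- Let w₀, w₁, …, w_{n-2} : I → ℝ be differentiable functions, κ₂, …, κ_{n-1} : I → ℝ functions, and ε₂, …, ε_{n-1} ∈ {±1} signs, satisfying the system: w₁' - ε₂ε₃κ₃w₂ = 0; wᵢ' + κ_{i+1}w_{i-1} - ε_{i+1}ε_{i+2}κ_{i+2}w_{i+1} = 0 for i = 2,…,n-3; and w_{n-2}' + κ_{n-1}w_{n-3} = 0. Then the function Σ_{i=1}^{n-2} ε_{i+1} wᵢ² is constant on I. -/

import Mathlib

/-!
Differentiating `Σ ε_{i+1} w_i²` and inserting the system, the `i`-th term becomes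
`2 (a_{i+1} - a_i)` with `a_i = ε_{i+1} κ_{i+1} w_{i-1} w_i` (using `ε² = 1`), while the end terms
are `2 a_2` and `-2 a_{n-2}`; the sum telescopes to zero, and a function with vanishing
derivative on an open interval is constant.
-/

open Finset

theorem sum_sign_mul_mul_eq_zero_of_tridiagonal (N : ℕ) (hN : 2 ≤ N) (x d κ ε : ℕ → ℝ)
    (hε : ∀ i, ε i ^ 2 = 1)
    (h1 : d 1 - ε 2 * ε 3 * κ 3 * x 2 = 0)
    (hmid : ∀ i, 2 ≤ i → i ≤ N - 1 →
      d i + κ (i + 1) * x (i - 1) - ε (i + 1) * ε (i + 2) * κ (i + 2) * x (i + 1) = 0)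
    (hlast : d N + κ (N + 1) * x (N - 1) = 0) :
    ∑ i ∈ Icc 1 N, ε (i + 1) * x i * d i = 0 := by
  set flux : ℕ → ℝ := fun i => ε (i + 1) * κ (i + 1) * x (i - 1) * x i
  have hfirst : ε 2 * x 1 * d 1 = flux 2 := by
    linear_combination ε 2 * x 1 * h1 + ε 3 * κ 3 * x 1 * x 2 * hε 2
  have hmiddle : ∀ i ∈ Ico 2 N, ε (i + 1) * x i * d i = flux (i + 1) - flux i := by
    intro i hi
    obtain ⟨hi2, hiN⟩ := mem_Ico.mp hi
    simp only [flux, Nat.add_sub_cancel]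
    linear_combination ε (i + 1) * x i * hmid i hi2 (by omega)
      + ε (i + 2) * κ (i + 2) * x i * x (i + 1) * hε (i + 1)
  have hlast' : ε (N + 1) * x N * d N = -flux N := by
    linear_combination ε (N + 1) * x N * hlast
  rw [← Ico_add_one_right_eq_Icc, sum_Ico_succ_top (by omega), sum_eq_sum_Ico_succ_bot (by omega),
    sum_congr rfl hmiddle, sum_Ico_sub flux hN, hfirst, hlast']
  ring

theorem HasDerivAt.sum_mul_sq {ι : Type*} (t : Finset ι) (c : ι → ℝ) {f : ι → ℝ → ℝ}
    {f' : ι → ℝ} {s : ℝ} (hf : ∀ i ∈ t, HasDerivAt (f i) (f' i) s) :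
    HasDerivAt (fun s => ∑ i ∈ t, c i * f i s ^ 2) (2 * ∑ i ∈ t, c i * f i s * f' i) s := by
  rw [mul_sum]
  exact HasDerivAt.fun_sum fun i hi =>
    (((hf i hi).fun_pow 2).const_mul (c i)).congr_deriv (by norm_num; ring)

/-- conservation law for the spacelike g-rectifying ODE system:
under `w₁' = ε₂ε₃κ₃w₂`, `wᵢ' + κ_{i+1}w_{i-1} - ε_{i+1}ε_{i+2}κ_{i+2}w_{i+1} = 0`
for `2 ≤ i ≤ n-3`, and `w_{n-2}' + κ_{n-1}w_{n-3} = 0`, the function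
`Σ_{i=1}^{n-2} ε_{i+1} wᵢ²` is constant on the interval `I`. -/
theorem spacelike_conservation (n : ℕ) (hn : 4 ≤ n)
    (I : Set ℝ) (hIopen : IsOpen I) (hIconn : I.OrdConnected)
    (w : ℕ → ℝ → ℝ) (κ : ℕ → ℝ → ℝ) (ε : ℕ → ℝ)
    (hε : ∀ i, ε i = 1 ∨ ε i = -1)
    (hw : ∀ i, ∀ s ∈ I, DifferentiableAt ℝ (w i) s)
    (h1 : ∀ s ∈ I, deriv (w 1) s - ε 2 * ε 3 * κ 3 s * w 2 s = 0)
    (hmid : ∀ i, 2 ≤ i → i ≤ n - 3 → ∀ s ∈ I,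
      deriv (w i) s + κ (i + 1) s * w (i - 1) s
        - ε (i + 1) * ε (i + 2) * κ (i + 2) s * w (i + 1) s = 0)
    (hlast : ∀ s ∈ I, deriv (w (n - 2)) s + κ (n - 1) s * w (n - 3) s = 0) :
    ∀ s ∈ I, ∀ t ∈ I,
      (∑ i ∈ Finset.Icc 1 (n - 2), ε (i + 1) * (w i s) ^ 2)
        = ∑ i ∈ Finset.Icc 1 (n - 2), ε (i + 1) * (w i t) ^ 2 := by
  have hε_sq : ∀ i, ε i ^ 2 = 1 := fun i => by rcases hε i with h | h <;> simp [h]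
  have hderiv : ∀ s ∈ I, HasDerivAt (fun s => ∑ i ∈ Icc 1 (n - 2), ε (i + 1) * w i s ^ 2)
      (2 * ∑ i ∈ Icc 1 (n - 2), ε (i + 1) * w i s * deriv (w i) s) s :=
    fun s hs => HasDerivAt.sum_mul_sq _ _ fun i _ => (hw i s hs).hasDerivAt
  have hzero : ∀ s ∈ I, ∑ i ∈ Icc 1 (n - 2), ε (i + 1) * w i s * deriv (w i) s = 0 := by
    intro s hs
    have hlast_s := hlast s hs
    rw [show n - 1 = n - 2 + 1 by omega, show n - 3 = n - 2 - 1 by omega] at hlast_s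
    exact sum_sign_mul_mul_eq_zero_of_tridiagonal (n - 2) (by omega) (w · s)
      (fun i => deriv (w i) s) (κ · s) ε hε_sq (h1 s hs) (fun i hi2 hi => hmid i hi2 (by omega) s hs) hlast_s
  intro s hs t ht
  refine hIopen.is_const_of_deriv_eq_zero hIconn.isPreconnected
    (fun x hx => (hderiv x hx).differentiableAt.differentiableWithinAt) (fun x hx => ?_) hs ht
  rw [(hderiv x hx).deriv, hzero x hx, mul_zero, Pi.zero_apply]
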